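/- arXiv:2510.18592 — 3 statements merged into one kernel-verified Lean document; each statement's English description precedes it below -/
import Mathlib

section
/- Let ℓ ≥ 1, let q be a prime with q ≥ 2ℓ², and let α, α' : Fin ℓ → Bool be two distinct bitstrings. Set m = 2^(Nat.log 2 q), so that m ≤ q. Then the number of natural numbers r with r < m such that Φ_q((r : ZMod q); α) = Φ_q((r : ZMod q); α') satisfies count · ℓ < m; in particular, for r drawn uniformly at random from {0, …, m−1}, the probability that Φ_q(r; α) = Φ_q(r; α') is strictly less than 1/ℓ. -/
/-! Two distinct bitstrings give distinct polynomials `Σ sᵢ X^(i+1)` of degree at most `ℓ`, so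
their difference has at most `ℓ` roots in the field `ZMod q`. The integers `0, …, m - 1` are
distinct modulo `q` because `m ≤ q`, hence at most `ℓ` of them are collisions; and
`ℓ² ≤ q / 2 < m` since `m` is the largest power of two not exceeding `q`. -/

def Phi (q ℓ : ℕ) (x : ZMod q) (s : Fin ℓ → Bool) : ZMod q :=
  ∑ i : Fin ℓ, (if s i then 1 else 0) * x ^ ((i : ℕ) + 1)

open Polynomial Finset

theorem Polynomial.card_filter_eval_eq_zero_le {R ι : Type*} [CommRing R] [IsDomain R]
    [DecidableEq R] {p : R[X]} (hp : p ≠ 0) {s : Finset ι} {f : ι → R} (hf : Set.InjOn f s) :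
    #(s.filter fun i => p.eval (f i) = 0) ≤ p.natDegree := by
  rw [← card_image_of_injOn (hf.mono (filter_subset _ _))]
  refine card_le_degree_of_subset_roots fun x hx => ?_
  obtain ⟨i, hi, rfl⟩ := mem_image.1 hx
  exact (mem_roots hp).2 (mem_filter.1 hi).2

theorem Nat.lt_two_mul_two_pow_log {n : ℕ} : n < 2 * 2 ^ Nat.log 2 n := by
  simpa [pow_succ, mul_comm] using Nat.lt_pow_succ_log_self one_lt_two n

section BitPoly

variable (R : Type*) [Semiring R] {ℓ : ℕ}

noncomputable def bitPoly (s : Fin ℓ → Bool) : R[X] :=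
  ∑ i : Fin ℓ, if s i then X ^ ((i : ℕ) + 1) else 0

theorem eval_bitPoly {q : ℕ} (x : ZMod q) (s : Fin ℓ → Bool) :
    (bitPoly (ZMod q) s).eval x = Phi q ℓ x s := by
  simp [bitPoly, Phi, eval_finsetSum, apply_ite (eval x)]

theorem natDegree_bitPoly_le (s : Fin ℓ → Bool) : (bitPoly R s).natDegree ≤ ℓ := by
  refine natDegree_sum_le_of_forall_le _ _ fun i _ => ?_
  split_ifs
  · exact (natDegree_X_pow_le _).trans i.2
  · simp

theorem coeff_bitPoly_succ (s : Fin ℓ → Bool) (i : Fin ℓ) :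
    (bitPoly R s).coeff ((i : ℕ) + 1) = if s i then 1 else 0 := by
  rw [bitPoly, finsetSum_coeff, sum_eq_single i]
  · split_ifs <;> simp
  · intro j _ hji
    split_ifs <;> simp [coeff_X_pow, Fin.val_eq_val, hji.symm]
  · simp

theorem bitPoly_injective [Nontrivial R] : Function.Injective (bitPoly R (ℓ := ℓ)) := by
  intro s t hst
  funext i
  have hi := coeff_bitPoly_succ R s i
  rw [hst, coeff_bitPoly_succ] at hi
  cases hs : s i <;> cases ht : t i <;> simp [hs, ht] at hi ⊢

end BitPoly

theorem card_filter_Phi_eq_le {q ℓ m : ℕ} [Fact q.Prime] (hm : m ≤ q) {α α' : Fin ℓ → Bool}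
    (hαα' : α ≠ α') :
    #((range m).filter fun r : ℕ => Phi q ℓ (r : ZMod q) α = Phi q ℓ (r : ZMod q) α') ≤ ℓ := by
  set p := bitPoly (ZMod q) α - bitPoly (ZMod q) α'
  have hp : p ≠ 0 := sub_ne_zero.2 ((bitPoly_injective _).ne hαα')
  have hdeg : p.natDegree ≤ ℓ :=
    (natDegree_sub_le _ _).trans (max_le (natDegree_bitPoly_le _ _) (natDegree_bitPoly_le _ _))
  have hinj : Set.InjOn (fun r : ℕ => (r : ZMod q)) (range m) := fun a ha b hb hab => by
    simp only [coe_range, Set.mem_Iio] at ha hb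
    rwa [ZMod.natCast_eq_natCast_iff', Nat.mod_eq_of_lt (ha.trans_le hm),
      Nat.mod_eq_of_lt (hb.trans_le hm)] at hab
  calc _ = #((range m).filter fun r : ℕ => p.eval (r : ZMod q) = 0) := by
        simp only [p, eval_sub, eval_bitPoly, sub_eq_zero]
    _ ≤ ℓ := (card_filter_eval_eq_zero_le hp hinj).trans hdeg

/-- When `r` is drawn uniformly from the dyadic range `{0, …, 2^⌊log₂ q⌋ − 1}` with `q ≥ 2ℓ²`
prime and `α ≠ α'`, the number of values `r` with `Φ_q(r; α) = Φ_q(r; α')` satisfies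
`count · ℓ < m`; in particular the probability of this event is strictly less than `1/ℓ`. -/
theorem stmt_1 (ℓ q : ℕ) (hℓ : 1 ≤ ℓ) [Fact (Nat.Prime q)] (hq : 2 * ℓ ^ 2 ≤ q)
    (α α' : Fin ℓ → Bool) (hαα' : α ≠ α') :
    ∀ m : ℕ, m = 2 ^ (Nat.log 2 q) →
      m ≤ q ∧
      ((Finset.range m).filter
          fun r : ℕ => Phi q ℓ (r : ZMod q) α = Phi q ℓ (r : ZMod q) α').card * ℓ < m ∧
      ((((Finset.range m).filter
          fun r : ℕ => Phi q ℓ (r : ZMod q) α = Phi q ℓ (r : ZMod q) α').card : ℝ) / m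
        < 1 / ℓ) := by
  rintro m rfl
  have hmq : 2 ^ Nat.log 2 q ≤ q := Nat.pow_log_le_self 2 (Fact.out : q.Prime).ne_zero
  have hqm : q < 2 * 2 ^ Nat.log 2 q := Nat.lt_two_mul_two_pow_log
  have hcount := card_filter_Phi_eq_le hmq hαα'
  have hkey : _ * ℓ < 2 ^ Nat.log 2 q :=
    calc _ ≤ ℓ * ℓ := Nat.mul_le_mul_right ℓ hcount
      _ < 2 ^ Nat.log 2 q := by nlinarith
  refine ⟨hmq, hkey, ?_⟩
  rw [div_lt_div_iff₀ (by positivity) (by exact_mod_cast hℓ), one_mul]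
  exact_mod_cast hkey
end

section
/- Let n and d be natural numbers with d ≥ 1 such that iterLog d n ≤ 16 and iterLog j n > 16 for every j < d. Then for every j with 1 ≤ j < d, iterLog j n ≥ 16 · 2^(d − 1 − j). -/
/-! Since `2 m ≤ 2 ^ m`, passing to `log₂` at least halves a number, so going down from level
`d - 1` (where `iterLog` still exceeds `16`) to level `j` multiplies by at least `2 ^ (d - 1 - j)`. -/

/-- The iterated base-2 logarithm: `iterLog 0 n = n`, `iterLog (d+1) n = log₂ (iterLog d n)`. -/
def iterLog : ℕ → ℕ → ℕ
  | 0, n => n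
  | d + 1, n => Nat.log 2 (iterLog d n)

theorem Nat.two_mul_le_two_pow (m : ℕ) : 2 * m ≤ 2 ^ m := by
  induction m with
  | zero => simp
  | succ m ih =>
    rcases m.eq_zero_or_pos with rfl | -
    · simp
    · have := Nat.one_le_two_pow (n := m)
      rw [pow_succ]
      omega

theorem Nat.two_mul_le_of_le_log_two {m x : ℕ} (h : m ≤ Nat.log 2 x) : 2 * m ≤ x := by
  rcases eq_or_ne x 0 with rfl | hx
  · simp_all
  · exact (Nat.two_mul_le_two_pow m).trans (Nat.pow_le_of_le_log hx h)

theorem two_mul_iterLog_succ_le (j n : ℕ) : 2 * iterLog (j + 1) n ≤ iterLog j n :=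
  Nat.two_mul_le_of_le_log_two le_rfl

theorem two_pow_mul_iterLog_add_le (j k n : ℕ) : 2 ^ k * iterLog (j + k) n ≤ iterLog j n := by
  induction k with
  | zero => simp
  | succ k ih =>
    calc 2 ^ (k + 1) * iterLog (j + (k + 1)) n
        = 2 ^ k * (2 * iterLog (j + k + 1) n) := by rw [pow_succ, mul_assoc, add_assoc]
      _ ≤ 2 ^ k * iterLog (j + k) n := Nat.mul_le_mul_left _ (two_mul_iterLog_succ_le _ _)
      _ ≤ iterLog j n := ih

theorem stmt_11_general (n d : ℕ)
    (h2 : ∀ j < d, 16 < iterLog j n) :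
    ∀ j, 1 ≤ j → j < d → 16 * 2 ^ (d - 1 - j) ≤ iterLog j n := by
  intro j _ hjd
  have hlast : 16 < iterLog (j + (d - 1 - j)) n := h2 _ (by omega)
  calc 16 * 2 ^ (d - 1 - j) ≤ 2 ^ (d - 1 - j) * iterLog (j + (d - 1 - j)) n := by
        rw [mul_comm]; exact Nat.mul_le_mul_left _ hlast.le
    _ ≤ iterLog j n := two_pow_mul_iterLog_add_le j _ n

/-- If `d ≥ 1` is the first level at which the iterated logarithm drops to at most `16`,
then for every `1 ≤ j < d` we have `iterLog j n ≥ 16 · 2^(d − 1 − j)`. -/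
theorem stmt_11 (n d : ℕ) (hd : 1 ≤ d) (h1 : iterLog d n ≤ 16)
    (h2 : ∀ j < d, 16 < iterLog j n) :
    ∀ j, 1 ≤ j → j < d → 16 * 2 ^ (d - 1 - j) ≤ iterLog j n :=
  stmt_11_general n d h2
end

section
/- For every natural constant c ≥ 1 there exists N such that for all n ≥ N, (c · iterLog 2 n)^(2 · logStar n) < iterLog 1 n; that is, (c · log₂ log₂ n)^(2 · log* n) < log₂ n for all sufficiently large n. -/
/-- `log* n`: the least `d` such that `iterLog d n ≤ 1`. -/
noncomputable def logStar (n : ℕ) : ℕ := sInf {d | iterLog d n ≤ 1}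

/-!
Write `ℓ = log₂ log₂ n` and `m = log₂ ℓ`. Since `log* x ≤ log₂ x + 1`, peeling two logarithms off `n`
gives `log* n ≤ m + 3`, while `c · ℓ < 2^(2m+2)` once `m ≥ log₂ c`. So the left-hand side is below
`2^((2m+6)²)`, and since `(2m+6)² < 2^m ≤ ℓ` for `m ≥ 10`, it is below `2^ℓ ≤ log₂ n`.
-/

lemma iterLog_succ' (d n : ℕ) : iterLog (d + 1) n = iterLog d (Nat.log 2 n) := by
  induction d with
  | zero => rfl
  | succ d ih => exact congrArg (Nat.log 2) ih

lemma iterLog_mono (d : ℕ) : Monotone (iterLog d) := by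
  induction d with
  | zero => exact monotone_id
  | succ d ih => exact fun _ _ h => Nat.log_mono_right (ih h)

lemma iterLog_logStar_le_one (n : ℕ) : iterLog (logStar n) n ≤ 1 := by
  refine Nat.sInf_mem (s := {d | iterLog d n ≤ 1}) ?_
  induction n using Nat.strong_induction_on with
  | _ n ih =>
    rcases le_or_gt n 1 with h | h
    · exact ⟨0, h⟩
    · obtain ⟨d, hd⟩ := ih (Nat.log 2 n) (Nat.log_lt_self 2 (by omega))
      exact ⟨d + 1, by rwa [Set.mem_ofPred_eq, iterLog_succ']⟩

lemma logStar_le_logStar_log_add_one (n : ℕ) : logStar n ≤ logStar (Nat.log 2 n) + 1 :=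
  Nat.sInf_le (by rw [Set.mem_ofPred_eq, iterLog_succ']; exact iterLog_logStar_le_one _)

lemma logStar_le_log_add_one (n : ℕ) : logStar n ≤ Nat.log 2 n + 1 := by
  induction n using Nat.strong_induction_on with
  | _ n ih =>
    rcases le_or_gt n 1 with h | h
    · exact (Nat.sInf_eq_zero.2 (Or.inl h)).trans_le (Nat.zero_le _)
    · have hlog : Nat.log 2 n ≠ 0 := (Nat.log_pos one_lt_two h).ne'
      have hloglog := Nat.log_lt_self 2 hlog
      have ih_log := ih _ (Nat.log_lt_self 2 (by omega))
      have hstep := logStar_le_logStar_log_add_one n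
      omega

lemma logStar_le_logStar_iterLog_add (d n : ℕ) : logStar n ≤ logStar (iterLog d n) + d := by
  induction d with
  | zero => rfl
  | succ d ih =>
    have hstep := logStar_le_logStar_log_add_one (iterLog d n)
    exact ih.trans (by rw [iterLog]; omega)

lemma sq_two_mul_add_six_lt_two_pow {m : ℕ} (hm : 10 ≤ m) : (2 * m + 6) ^ 2 < 2 ^ m := by
  induction m, hm using Nat.le_induction with
  | base => norm_num
  | succ m hm ih =>
    calc (2 * (m + 1) + 6) ^ 2 ≤ 2 * (2 * m + 6) ^ 2 := by nlinarith
      _ < 2 * 2 ^ m := by omega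
      _ = 2 ^ (m + 1) := (pow_succ' 2 m).symm

lemma mul_pow_lt_two_pow {c ℓ s : ℕ} (hm : max (Nat.log 2 c) 10 ≤ Nat.log 2 ℓ)
    (hs : s ≤ Nat.log 2 ℓ + 3) : (c * ℓ) ^ (2 * s) < 2 ^ ℓ := by
  set m := Nat.log 2 ℓ
  have hℓ : ℓ ≠ 0 := by rintro rfl; simp [m] at hm
  have hbase : c * ℓ < 2 ^ (2 * m + 6) :=
    calc c * ℓ < 2 ^ (Nat.log 2 c + 1) * 2 ^ (m + 1) :=
          Nat.mul_lt_mul'' (Nat.lt_pow_succ_log_self one_lt_two c)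
            (Nat.lt_pow_succ_log_self one_lt_two ℓ)
      _ = 2 ^ (Nat.log 2 c + 1 + (m + 1)) := (pow_add _ _ _).symm
      _ ≤ 2 ^ (2 * m + 6) := Nat.pow_le_pow_right two_pos (by omega)
  calc (c * ℓ) ^ (2 * s) ≤ (2 ^ (2 * m + 6)) ^ (2 * s) := Nat.pow_le_pow_left hbase.le _
    _ ≤ (2 ^ (2 * m + 6)) ^ (2 * m + 6) := Nat.pow_le_pow_right (by positivity) (by omega)
    _ = 2 ^ ((2 * m + 6) ^ 2) := by rw [← pow_mul, sq]
    _ < 2 ^ ℓ := Nat.pow_lt_pow_right one_lt_two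
          ((sq_two_mul_add_six_lt_two_pow (le_of_max_le_right hm)).trans_le
            (Nat.pow_log_le_self 2 hℓ))

theorem stmt_14_general (c : ℕ) :
    ∃ N : ℕ, ∀ n ≥ N, (c * iterLog 2 n) ^ (2 * logStar n) < iterLog 1 n := by
  set m₀ := max (Nat.log 2 c) 10
  refine ⟨2 ^ 2 ^ 2 ^ m₀, fun n hn => ?_⟩
  have hm : m₀ ≤ Nat.log 2 (iterLog 2 n) := by
    simpa [iterLog, Nat.log_pow] using iterLog_mono 3 hn
  have hstar : logStar n ≤ Nat.log 2 (iterLog 2 n) + 3 :=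
    (logStar_le_logStar_iterLog_add 2 n).trans
      (Nat.add_le_add_right (logStar_le_log_add_one _) 2)
  have hlog : iterLog 1 n ≠ 0 := by
    intro h
    change m₀ ≤ Nat.log 2 (Nat.log 2 (iterLog 1 n)) at hm
    simp [h, m₀] at hm
  exact (mul_pow_lt_two_pow hm hstar).trans_le (Nat.pow_log_le_self 2 hlog)

/-- For every constant `c ≥ 1` and all sufficiently large `n`,
`(c · log₂ log₂ n)^(2 · log* n) < log₂ n`. -/
theorem stmt_14 (c : ℕ) (hc : 1 ≤ c) :
    ∃ N : ℕ, ∀ n ≥ N, (c * iterLog 2 n) ^ (2 * logStar n) < iterLog 1 n :=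
  stmt_14_general c
end
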